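/- Let K be a local field, φ : E → E' an isogeny of elliptic curves over K of prime degree p. Then for every prime ℓ ≠ p, the induced map on component groups E(K̄)/E₀ → E'(K̄)/E'₀ restricts to an isomorphism on ℓ-primary parts; consequently the ratio of Tamagawa numbers c(E)/c(E') is a power of p (possibly negative power). -/

import Mathlib

/-!
Since `ψ ∘ φ` and `φ ∘ ψ` are multiplication by `p`, both the kernel and the cokernel of `φ` are
killed by `p`, hence are `p`-groups. Multiplication by `p` is invertible on an `ℓ`-primary part
for `ℓ` coprime to `p`, so `φ` is injective there (its kernel meets it trivially) and surjective
there (`b = φ (ψ c)` where `p • c = b`). Finally `|A| = |ker φ| |im φ|` and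
`|B| = |coker φ| |im φ|`, so `|A| / |B|` is a quotient of two powers of `p`.
-/

theorem eq_zero_of_nsmul_eq_zero_of_coprime {G : Type*} [AddGroup G] {a : G} {m n : ℕ}
    (hmn : m.Coprime n) (hm : m • a = 0) (hn : n • a = 0) : a = 0 :=
  AddMonoid.addOrderOf_eq_one_iff.mp <|
    Nat.eq_one_of_dvd_coprimes hmn (addOrderOf_dvd_of_nsmul_eq_zero hm)
      (addOrderOf_dvd_of_nsmul_eq_zero hn)

theorem exists_nsmul_eq_of_coprime {G : Type*} [AddCommGroup G] {b : G} {m n : ℕ}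
    (hmn : m.Coprime n) (hn : n • b = 0) : ∃ c : G, m • c = b ∧ n • c = 0 := by
  obtain ⟨u, v, huv⟩ := Nat.isCoprime_iff_coprime.mpr hmn
  refine ⟨u • b, ?_, by rw [smul_comm, hn, smul_zero]⟩
  calc m • u • b = (u * m + v * n) • b := by
        rw [add_smul, mul_smul v, natCast_zsmul, hn, smul_zero, add_zero, mul_smul,
          natCast_zsmul, smul_comm]
    _ = b := by rw [huv, one_smul]

theorem exists_natCard_eq_pow_of_nsmul_eq_zero {G : Type*} [AddCommGroup G] [Finite G] {p : ℕ}
    (hp : p.Prime) (h : ∀ x : G, p • x = 0) : ∃ k : ℕ, Nat.card G = p ^ k :=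
  let ⟨k, _, hk⟩ := (Nat.dvd_prime_pow hp).mp (card_dvd_exponent_nsmul_rank' G h)
  ⟨k, hk⟩

namespace AddMonoidHom

variable {A B : Type*} [AddCommGroup A] [AddCommGroup B] (φ : A →+ B) {ψ : B →+ A} {p : ℕ}

theorem nsmul_eq_zero_of_mem_ker (hψφ : ∀ x : A, ψ (φ x) = p • x) (x : φ.ker) : p • x = 0 :=
  Subtype.ext <| by rw [AddSubgroup.coe_nsmul, ← hψφ, x.2, map_zero, AddSubgroup.coe_zero]

theorem nsmul_eq_zero_of_quotient_range (hφψ : ∀ y : B, φ (ψ y) = p • y)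
    (y : B ⧸ φ.range) : p • y = 0 := by
  induction y using QuotientAddGroup.induction_on with
  | H b => rw [← QuotientAddGroup.mk_nsmul, QuotientAddGroup.eq_zero_iff, ← hφψ]; exact ⟨ψ b, rfl⟩

theorem mapsTo_primary (ℓ : ℕ) :
    Set.MapsTo φ {a : A | ∃ n : ℕ, ℓ ^ n • a = 0} {b : B | ∃ n : ℕ, ℓ ^ n • b = 0} :=
  fun _ ⟨n, hn⟩ ↦ ⟨n, by rw [← map_nsmul, hn, map_zero]⟩

theorem injOn_primary (hψφ : ∀ x : A, ψ (φ x) = p • x) {ℓ : ℕ} (hℓ : p.Coprime ℓ) :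
    Set.InjOn φ {a : A | ∃ n : ℕ, ℓ ^ n • a = 0} := by
  rintro a₁ ⟨n₁, h₁⟩ a₂ ⟨n₂, h₂⟩ heq
  rw [← sub_eq_zero]
  refine eq_zero_of_nsmul_eq_zero_of_coprime (hℓ.pow_right (n₁ + n₂)) ?_ ?_
  · rw [← hψφ, map_sub, heq, sub_self, map_zero]
  · rw [smul_sub, pow_add, mul_smul, smul_comm, h₁, smul_zero, mul_smul, h₂, smul_zero, sub_zero]

theorem surjOn_primary (hφψ : ∀ y : B, φ (ψ y) = p • y) {ℓ : ℕ} (hℓ : p.Coprime ℓ) :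
    Set.SurjOn φ {a : A | ∃ n : ℕ, ℓ ^ n • a = 0} {b : B | ∃ n : ℕ, ℓ ^ n • b = 0} := by
  rintro b ⟨n, hn⟩
  obtain ⟨c, rfl, hc⟩ := exists_nsmul_eq_of_coprime (hℓ.pow_right n) hn
  exact ⟨ψ c, ⟨n, by rw [← map_nsmul, hc, map_zero]⟩, hφψ c⟩

theorem exists_natCard_eq_zpow_mul_natCard [Finite A] [Finite B] (hp : p.Prime)
    (hker : ∀ x : φ.ker, p • x = 0) (hcoker : ∀ y : B ⧸ φ.range, p • y = 0) :
    ∃ k : ℤ, (Nat.card A : ℚ) = (p : ℚ) ^ k * (Nat.card B : ℚ) := by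
  obtain ⟨a, ha⟩ := exists_natCard_eq_pow_of_nsmul_eq_zero hp hker
  obtain ⟨b, hb⟩ := exists_natCard_eq_pow_of_nsmul_eq_zero hp hcoker
  have hA : Nat.card A = p ^ a * Nat.card φ.range := by
    rw [← φ.ker.card_mul_index, AddSubgroup.index_ker, ha]
  have hB : Nat.card B = p ^ b * Nat.card φ.range := by
    rw [← φ.range.card_mul_index, AddSubgroup.index, hb, mul_comm]
  have hp0 : (p : ℚ) ≠ 0 := by exact_mod_cast hp.ne_zero
  refine ⟨a - b, ?_⟩
  rw [hA, hB, zpow_sub₀ hp0, zpow_natCast, zpow_natCast]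
  push_cast
  field_simp

end AddMonoidHom

/-- Let `φ : E → E'` be an isogeny of elliptic curves over a local field
of prime degree `p`.  Then for every prime `ℓ ≠ p` the induced map on component groups
`E(K̄)/E₀ → E'(K̄)/E'₀` restricts to an isomorphism (a bijection) on `ℓ`-primary parts;
consequently the ratio of Tamagawa numbers `c(E)/c(E')` is a (possibly negative) power
of `p`.

Here the component groups are finite abelian groups `A, B`; `φ` induces `φ : A →+ B` and
its dual induces `ψ : B →+ A` with both composites equal to multiplication by `p`
(since `φᵗ∘φ = [p] = φ∘φᵗ`), and the Tamagawa numbers are `c = |A|`, `c' = |B|`. -/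
theorem component_group_primary_parts_and_tamagawa_ratio
    (p : ℕ) (hp : p.Prime) {A B : Type*} [AddCommGroup A] [AddCommGroup B]
    [Finite A] [Finite B]
    (φ : A →+ B) (ψ : B →+ A)
    (hψφ : ∀ x : A, ψ (φ x) = p • x) (hφψ : ∀ y : B, φ (ψ y) = p • y) :
    (∀ ℓ : ℕ, ℓ.Prime → ℓ ≠ p →
      Set.BijOn φ {a : A | ∃ n : ℕ, ℓ ^ n • a = 0} {b : B | ∃ n : ℕ, ℓ ^ n • b = 0}) ∧
    ∃ k : ℤ, (Nat.card A : ℚ) = (p : ℚ) ^ k * (Nat.card B : ℚ) := by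
  refine ⟨fun ℓ hℓ hne ↦ ?_, φ.exists_natCard_eq_zpow_mul_natCard hp
    (φ.nsmul_eq_zero_of_mem_ker hψφ) (φ.nsmul_eq_zero_of_quotient_range hφψ)⟩
  have hcop : p.Coprime ℓ := (Nat.coprime_primes hp hℓ).mpr hne.symm
  exact ⟨φ.mapsTo_primary ℓ, φ.injOn_primary hψφ hcop, φ.surjOn_primary hφψ hcop⟩
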